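/- arXiv:2503.00387 — 2 statements merged into one kernel-verified Lean document; each statement's English description precedes it below -/
import Mathlib

section
/- Let d, T be natural numbers with d ≥ 1, let λ > 0 and B ≥ 0 be reals, let x_0, …, x_{T−1} ∈ ℝ^d satisfy ‖x_t‖₂ ≤ B for all t < T, and let c_0, …, c_{T−1} ≥ 0 be reals. Define the matrices Σ_0 = λ·I and Σ_{t+1} = Σ_t + x_t x_tᵀ + c_t·I for t < T, and set w_t² = x_tᵀ Σ_t⁻¹ x_t. If β ≥ 0 and r_0, …, r_{T−1} are reals satisfying r_t² ≤ 4·β·min(w_t², 1) for every t < T, then the sum of squared instantaneous regrets satisfies Σ_{t=0}^{T−1} r_t² ≤ 8·β·d·log(1 + (T·B² + d·Σ_{t=0}^{T−1} c_t)/(d·λ)). -/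
/-!
Each update multiplies `det Σ` by at least `1 + w_t²`: by the matrix determinant lemma for the
rank-one term, and because adding `c_t • 1` can only raise the eigenvalues of a positive
semidefinite matrix. Since `min (w², 1) ≤ 2 log (1 + w²)`, the sum of the `r_t²` is at most
`8β (log det Σ_T - log det Σ_0)`, and AM-GM on the eigenvalues (concavity of `log`) bounds
`log det Σ_T` by `d log (tr Σ_T / d)`, where the trace grows by at most `B² + d c_t` per step.
-/

open Matrix Finset

namespace Matrix

variable {m : Type*} [Fintype m]

theorem posSemidef_vecMulVec_self (v : m → ℝ) : (vecMulVec v v).PosSemidef := by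
  simpa using posSemidef_vecMulVec_self_star v

variable [DecidableEq m]

theorem det_add_vecMulVec {R : Type*} [CommRing R] {A : Matrix m m R} (hA : IsUnit A.det)
    (u v : m → R) : (A + vecMulVec u v).det = A.det * (1 + v ⬝ᵥ A⁻¹ *ᵥ u) := by
  have hfactor : A + vecMulVec u v = A * (1 + vecMulVec (A⁻¹ *ᵥ u) v) := by
    rw [Matrix.mul_add, Matrix.mul_one, mul_vecMulVec, mulVec_mulVec, mul_nonsing_inv A hA,
      one_mulVec]
  rw [hfactor, det_mul, vecMulVec_eq Unit, det_one_add_replicateCol_mul_replicateRow]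

theorem IsHermitian.det_add_smul_one {A : Matrix m m ℝ} (hA : A.IsHermitian) (c : ℝ) :
    (A + c • 1).det = ∏ i, (hA.eigenvalues i + c) := by
  have hcfc : A + c • 1 = cfc (fun x => x + c) A := by
    rw [cfc_add_const c (fun x => x) A, cfc_id' ℝ A, Algebra.algebraMap_eq_smul_one]
  rw [hcfc, hA.cfc_eq]
  simp [IsHermitian.cfc, -Unitary.conjStarAlgAut_apply]

theorem PosSemidef.det_le_det_add_smul_one {A : Matrix m m ℝ} (hA : A.PosSemidef) {c : ℝ}
    (hc : 0 ≤ c) : A.det ≤ (A + c • 1).det := by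
  rw [hA.isHermitian.det_add_smul_one, hA.isHermitian.det_eq_prod_eigenvalues]
  exact prod_le_prod (fun i _ => hA.eigenvalues_nonneg i) fun i _ => by simpa using hc

theorem PosDef.dotProduct_inv_mulVec_nonneg {A : Matrix m m ℝ} (hA : A.PosDef) (v : m → ℝ) :
    0 ≤ v ⬝ᵥ A⁻¹ *ᵥ v := by
  simpa using hA.inv.posSemidef.dotProduct_mulVec_nonneg v

theorem PosDef.det_mul_one_add_le_det_add {A : Matrix m m ℝ} (hA : A.PosDef) (v : m → ℝ)
    {c : ℝ} (hc : 0 ≤ c) : A.det * (1 + v ⬝ᵥ A⁻¹ *ᵥ v) ≤ (A + vecMulVec v v + c • 1).det := by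
  rw [← det_add_vecMulVec (isUnit_iff_ne_zero.mpr hA.det_pos.ne')]
  exact (hA.add_posSemidef (posSemidef_vecMulVec_self v)).posSemidef.det_le_det_add_smul_one hc

theorem PosDef.log_det_le_card_mul_log [Nonempty m] {A : Matrix m m ℝ} (hA : A.PosDef) {a : ℝ}
    (htrace : A.trace ≤ Fintype.card m * a) :
    Real.log A.det ≤ Fintype.card m * Real.log a := by
  have hcard : (0 : ℝ) < Fintype.card m := by exact_mod_cast Fintype.card_pos
  have hev := hA.eigenvalues_pos
  have jensen := strictConcaveOn_log_Ioi.concaveOn.le_map_sum (t := univ)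
    (w := fun _ => (Fintype.card m : ℝ)⁻¹) (p := hA.isHermitian.eigenvalues)
    (fun _ _ => by positivity) (by simp [hcard.ne']) fun i _ => hev i
  simp only [smul_eq_mul, ← mul_sum, inv_mul_le_iff₀ hcard] at jensen
  have hmean : (Fintype.card m : ℝ)⁻¹ * ∑ i, hA.isHermitian.eigenvalues i ≤ a := by
    rw [inv_mul_le_iff₀ hcard]
    simpa [hA.isHermitian.trace_eq_sum_eigenvalues] using htrace
  calc Real.log A.det = ∑ i, Real.log (hA.isHermitian.eigenvalues i) := by
        simp [hA.isHermitian.det_eq_prod_eigenvalues, Real.log_prod fun i _ => (hev i).ne']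
    _ ≤ Fintype.card m * Real.log a := by
        refine jensen.trans ?_
        gcongr
        exact mul_pos (inv_pos.mpr hcard) (sum_pos (fun i _ => hev i) univ_nonempty)

end Matrix

theorem Real.min_le_two_mul_log_one_add {u : ℝ} (hu : 0 ≤ u) :
    min u 1 ≤ 2 * Real.log (1 + u) := by
  have hpos : 0 < 1 + u := by linarith
  have hmin : min u 1 * (1 + u) ≤ 2 * u := by
    rcases le_total u 1 with h | h
    · rw [min_eq_left h]; nlinarith
    · rw [min_eq_right h]; linarith
  calc min u 1 ≤ 2 * (u / (1 + u)) := by rwa [mul_div_assoc', le_div_iff₀ hpos]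
    _ = 2 * (1 - (1 + u)⁻¹) := by field_simp; ring
    _ ≤ 2 * Real.log (1 + u) := by gcongr; exact Real.one_sub_inv_le_log_of_pos hpos

theorem sum_range_log_one_add_le {T : ℕ} {f w : ℕ → ℝ} (hf : ∀ t ≤ T, 0 < f t)
    (hw : ∀ t < T, 0 ≤ w t) (hstep : ∀ t < T, f t * (1 + w t) ≤ f (t + 1)) :
    ∑ t ∈ range T, Real.log (1 + w t) ≤ Real.log (f T) - Real.log (f 0) := by
  rw [← sum_range_sub (fun t => Real.log (f t))]
  refine sum_le_sum fun t ht => ?_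
  have ht := mem_range.mp ht
  have hlog := Real.log_le_log (by nlinarith [hf t ht.le, hw t ht]) (hstep t ht)
  rw [Real.log_mul (hf t ht.le).ne' (by linarith [hw t ht])] at hlog
  linarith

section DesignMatrix

variable {m : Type*} [Fintype m] [DecidableEq m] {T : ℕ} {lam : ℝ} {x : ℕ → m → ℝ}
  {c : ℕ → ℝ} {S : ℕ → Matrix m m ℝ}

theorem posDef_of_design (hlam : 0 < lam) (hc : ∀ t < T, 0 ≤ c t) (hS0 : S 0 = lam • 1)
    (hSs : ∀ t < T, S (t + 1) = S t + vecMulVec (x t) (x t) + c t • 1) :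
    ∀ t ≤ T, (S t).PosDef := by
  intro t
  induction t with
  | zero => intro _; rw [hS0]; exact PosDef.one.smul hlam
  | succ t ih =>
    intro ht
    rw [hSs t ht]
    exact ((ih (by omega)).add_posSemidef (posSemidef_vecMulVec_self (x t))).add_posSemidef
      (PosSemidef.one.smul (hc t ht))

theorem trace_eq_of_design (hS0 : S 0 = lam • 1)
    (hSs : ∀ t < T, S (t + 1) = S t + vecMulVec (x t) (x t) + c t • 1) :
    ∀ t ≤ T, (S t).trace =
      Fintype.card m * lam + ∑ s ∈ range t, (x s ⬝ᵥ x s + Fintype.card m * c s) := by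
  intro t
  induction t with
  | zero => intro _; simp [hS0, mul_comm]
  | succ t ih =>
    intro ht
    rw [hSs t ht, trace_add, trace_add, ih (by omega), sum_range_succ, trace_vecMulVec]
    simp only [trace_smul, trace_one, smul_eq_mul]
    ring

/-- The elliptical potential lemma. -/
theorem sum_log_one_add_dotProduct_inv_mulVec_le [Nonempty m] {B : ℝ} (hlam : 0 < lam)
    (hc : ∀ t < T, 0 ≤ c t) (hS0 : S 0 = lam • 1)
    (hSs : ∀ t < T, S (t + 1) = S t + vecMulVec (x t) (x t) + c t • 1)
    (hx : ∀ t < T, x t ⬝ᵥ x t ≤ B ^ 2) :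
    ∑ t ∈ range T, Real.log (1 + x t ⬝ᵥ (S t)⁻¹ *ᵥ x t) ≤
      Fintype.card m * Real.log
        (1 + (T * B ^ 2 + Fintype.card m * ∑ t ∈ range T, c t) / (Fintype.card m * lam)) := by
  set Q := (T * B ^ 2 + Fintype.card m * ∑ t ∈ range T, c t) / (Fintype.card m * lam)
  have hPD := posDef_of_design hlam hc hS0 hSs
  have hpotential : ∑ t ∈ range T, Real.log (1 + x t ⬝ᵥ (S t)⁻¹ *ᵥ x t) ≤
      Real.log (S T).det - Real.log (S 0).det :=
    sum_range_log_one_add_le (fun t ht => (hPD t ht).det_pos)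
      (fun t ht => (hPD t ht.le).dotProduct_inv_mulVec_nonneg (x t)) fun t ht => by
        rw [hSs t ht]; exact (hPD t ht.le).det_mul_one_add_le_det_add (x t) (hc t ht)
  have hdet0 : Real.log (S 0).det = Fintype.card m * Real.log lam := by
    rw [hS0, det_smul, det_one, mul_one, Real.log_pow]
  have htrace : (S T).trace ≤ Fintype.card m * (lam * (1 + Q)) := by
    have hsum : ∑ t ∈ range T, x t ⬝ᵥ x t ≤ T * B ^ 2 := by
      simpa using sum_le_card_nsmul (range T) _ _ fun t ht => hx t (mem_range.mp ht)
    have hcardlam : (Fintype.card m : ℝ) * lam ≠ 0 := by positivity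
    rw [trace_eq_of_design hS0 hSs T le_rfl, sum_add_distrib, ← mul_sum, ← mul_assoc,
      mul_one_add, mul_div_cancel₀ _ hcardlam]
    linarith
  have hQ : 0 ≤ Q := by
    have := sum_nonneg fun t ht => hc t (mem_range.mp ht)
    positivity
  have hlogdet := (hPD T le_rfl).log_det_le_card_mul_log htrace
  rw [Real.log_mul hlam.ne' (by positivity)] at hlogdet
  linarith

end DesignMatrix

theorem sum_of_squares_regret_bound_general
    (d T : ℕ) (hd : 1 ≤ d) (lam B : ℝ) (hlam : 0 < lam)
    (x : ℕ → Fin d → ℝ) (hx : ∀ t < T, Real.sqrt (∑ i, x t i ^ 2) ≤ B)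
    (c : ℕ → ℝ) (hc : ∀ t < T, 0 ≤ c t)
    (S : ℕ → Matrix (Fin d) (Fin d) ℝ)
    (hS0 : S 0 = lam • (1 : Matrix (Fin d) (Fin d) ℝ))
    (hSs : ∀ t < T, S (t + 1) =
      S t + vecMulVec (x t) (x t) + c t • (1 : Matrix (Fin d) (Fin d) ℝ))
    (β : ℝ) (hβ : 0 ≤ β) (r : ℕ → ℝ)
    (hr : ∀ t < T, r t ^ 2 ≤ 4 * β * min (x t ⬝ᵥ (S t)⁻¹ *ᵥ x t) 1) :
    ∑ t ∈ Finset.range T, r t ^ 2 ≤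
      8 * β * d *
        Real.log (1 + ((T : ℝ) * B ^ 2 + d * ∑ t ∈ Finset.range T, c t) / (d * lam)) := by
  have : NeZero d := ⟨by omega⟩
  have hnorm (t) (ht : t < T) : x t ⬝ᵥ x t ≤ B ^ 2 := by
    simpa [dotProduct, sq] using (Real.sqrt_le_iff.mp (hx t ht)).2
  have hpotential := sum_log_one_add_dotProduct_inv_mulVec_le hlam hc hS0 hSs hnorm
  rw [Fintype.card_fin] at hpotential
  have hPD := posDef_of_design hlam hc hS0 hSs
  calc ∑ t ∈ range T, r t ^ 2
      ≤ ∑ t ∈ range T, 8 * β * Real.log (1 + x t ⬝ᵥ (S t)⁻¹ *ᵥ x t) := by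
        refine sum_le_sum fun t ht => (hr t (mem_range.mp ht)).trans ?_
        have hw := (hPD t (mem_range.mp ht).le).dotProduct_inv_mulVec_nonneg (x t)
        nlinarith [Real.min_le_two_mul_log_one_add hw]
    _ ≤ 8 * β * d * Real.log (1 + (T * B ^ 2 + d * ∑ t ∈ range T, c t) / (d * lam)) := by
        rw [← mul_sum, mul_assoc _ (d : ℝ)]
        gcongr

theorem sum_of_squares_regret_bound
    (d T : ℕ) (hd : 1 ≤ d) (lam B : ℝ) (hlam : 0 < lam) (hB : 0 ≤ B)
    (x : ℕ → Fin d → ℝ) (hx : ∀ t < T, Real.sqrt (∑ i, x t i ^ 2) ≤ B)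
    (c : ℕ → ℝ) (hc : ∀ t < T, 0 ≤ c t)
    (S : ℕ → Matrix (Fin d) (Fin d) ℝ)
    (hS0 : S 0 = lam • (1 : Matrix (Fin d) (Fin d) ℝ))
    (hSs : ∀ t < T, S (t + 1) =
      S t + vecMulVec (x t) (x t) + c t • (1 : Matrix (Fin d) (Fin d) ℝ))
    (β : ℝ) (hβ : 0 ≤ β) (r : ℕ → ℝ)
    (hr : ∀ t < T, r t ^ 2 ≤ 4 * β * min (x t ⬝ᵥ (S t)⁻¹ *ᵥ x t) 1) :
    ∑ t ∈ Finset.range T, r t ^ 2 ≤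
      8 * β * d *
        Real.log (1 + ((T : ℝ) * B ^ 2 + d * ∑ t ∈ Finset.range T, c t) / (d * lam)) :=
  sum_of_squares_regret_bound_general d T hd lam B hlam x hx c hc S hS0 hSs β hβ r hr
end

section
/- Let T and d be natural numbers, let X be a real T×d matrix, let λ > 0 be real, and set Σ = XᵀX + λ·I (a positive definite d×d matrix). Let μ* ∈ ℝ^d and ξ ∈ ℝ^T, and define the ridge-regression estimator μ̂ = Σ⁻¹ Xᵀ (X μ* + ξ). Then √((μ̂ − μ*)ᵀ Σ (μ̂ − μ*)) ≤ √λ · ‖μ*‖₂ + √((Xᵀξ)ᵀ Σ⁻¹ (Xᵀξ)). -/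
/-! With `v = Xᵀξ - λμ*` the normal equations give `Σ(μ̂ - μ*) = v`, so the left-hand side is
`√(vᵀΣ⁻¹v)`, the `Σ⁻¹`-seminorm of `v`. The triangle inequality for that seminorm splits it into
the noise term and `√(λ²μ*ᵀΣ⁻¹μ*)`, and `Σ ⪰ λI` bounds the latter by `√λ‖μ*‖₂`. -/

open Matrix

namespace Matrix

variable {n : Type*}

theorem PosSemidef.posDef_add_smul_one [DecidableEq n] {A : Matrix n n ℝ} (hA : A.PosSemidef)
    {c : ℝ} (hc : 0 < c) : (A + c • 1).PosDef :=
  PosDef.posSemidef_add hA (PosDef.one.smul hc)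

variable [Fintype n]

theorem PosSemidef.sqrt_dotProduct_mulVec_sub_le {N : Matrix n n ℝ} (hN : N.PosSemidef)
    (x y : n → ℝ) :
    √((x - y) ⬝ᵥ N *ᵥ (x - y)) ≤ √(x ⬝ᵥ N *ᵥ x) + √(y ⬝ᵥ N *ᵥ y) := by
  let E := N.toSeminormedAddCommGroup hN
  -- the norm of `E` is `z ↦ √((N *ᵥ z) ⬝ᵥ star z)`
  have norm_eq (z : n → ℝ) : @norm _ E.toNorm z = √(z ⬝ᵥ N *ᵥ z) := by
    rw [dotProduct_comm]; rfl
  simpa only [norm_eq] using @norm_sub_le _ E.toSeminormedAddGroup x y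

variable [DecidableEq n]

theorem dotProduct_mulVec_inv_mulVec {R : Type*} [CommRing R] {M : Matrix n n R}
    (hM : IsUnit M.det) (v : n → R) :
    (M⁻¹ *ᵥ v) ⬝ᵥ M *ᵥ (M⁻¹ *ᵥ v) = v ⬝ᵥ M⁻¹ *ᵥ v := by
  rw [mulVec_mulVec, mul_nonsing_inv M hM, one_mulVec, dotProduct_comm]

theorem PosSemidef.mul_dotProduct_inv_add_smul_one_mulVec_le {A : Matrix n n ℝ}
    (hA : A.PosSemidef) {c : ℝ} (hc : 0 < c) (x : n → ℝ) :
    c * (x ⬝ᵥ (A + c • 1)⁻¹ *ᵥ x) ≤ x ⬝ᵥ x := by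
  have hdet : IsUnit (A + c • 1).det := (hA.posDef_add_smul_one hc).det_pos.ne'.isUnit
  set y := (A + c • 1)⁻¹ *ᵥ x
  have hx : x = (A + c • 1) *ᵥ y := by rw [mulVec_mulVec, mul_nonsing_inv _ hdet, one_mulVec]
  rw [add_mulVec, smul_mulVec, one_mulVec] at hx
  have hAy : 0 ≤ A *ᵥ y ⬝ᵥ y := by
    simpa [dotProduct_comm] using hA.dotProduct_mulVec_nonneg y
  have hAA : 0 ≤ A *ᵥ y ⬝ᵥ A *ᵥ y := Finset.sum_nonneg fun i _ => mul_self_nonneg _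
  -- `x ⬝ᵥ x - c * (x ⬝ᵥ y) = ‖A y‖² + c * yᵀ A y`
  rw [hx]
  simp only [add_dotProduct, dotProduct_add, smul_dotProduct, dotProduct_smul, smul_eq_mul,
    dotProduct_comm y]
  nlinarith

theorem transpose_mul_self_add_smul_one_inv_mulVec_sub {m : Type*} [Fintype m]
    (X : Matrix m n ℝ) {c : ℝ} (hdet : IsUnit (Xᵀ * X + c • 1).det) (μ : n → ℝ) (ξ : m → ℝ) :
    (Xᵀ * X + c • 1)⁻¹ *ᵥ (Xᵀ *ᵥ (X *ᵥ μ + ξ)) - μ =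
      (Xᵀ * X + c • 1)⁻¹ *ᵥ (Xᵀ *ᵥ ξ - c • μ) := by
  set M := Xᵀ * X + c • 1 with hM
  have hμ : M⁻¹ *ᵥ (M *ᵥ μ) = μ := by rw [mulVec_mulVec, nonsing_inv_mul _ hdet, one_mulVec]
  calc M⁻¹ *ᵥ (Xᵀ *ᵥ (X *ᵥ μ + ξ)) - μ = M⁻¹ *ᵥ (Xᵀ *ᵥ (X *ᵥ μ + ξ)) - M⁻¹ *ᵥ (M *ᵥ μ) := by
        rw [hμ]
    _ = M⁻¹ *ᵥ (Xᵀ *ᵥ (X *ᵥ μ + ξ) - M *ᵥ μ) := (mulVec_sub _ _ _).symm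
    _ = M⁻¹ *ᵥ (Xᵀ *ᵥ ξ - c • μ) := by
        rw [hM, add_mulVec, smul_mulVec, one_mulVec, ← mulVec_mulVec, mulVec_add]
        abel_nf

end Matrix

theorem ridge_deviation_bound
    (T d : ℕ) (X : Matrix (Fin T) (Fin d) ℝ) (lam : ℝ) (hlam : 0 < lam)
    (M : Matrix (Fin d) (Fin d) ℝ)
    (hM : M = Xᵀ * X + lam • (1 : Matrix (Fin d) (Fin d) ℝ))
    (mustar : Fin d → ℝ) (xi : Fin T → ℝ)
    (muhat : Fin d → ℝ)
    (hmuhat : muhat = M⁻¹ *ᵥ (Xᵀ *ᵥ (X *ᵥ mustar + xi))) :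
    Real.sqrt ((muhat - mustar) ⬝ᵥ M *ᵥ (muhat - mustar)) ≤
      Real.sqrt lam * Real.sqrt (∑ i, mustar i ^ 2) +
        Real.sqrt ((Xᵀ *ᵥ xi) ⬝ᵥ M⁻¹ *ᵥ (Xᵀ *ᵥ xi)) := by
  have hXX : (Xᵀ * X).PosSemidef := by simpa using posSemidef_conjTranspose_mul_self X
  have hMpd : M.PosDef := hM ▸ hXX.posDef_add_smul_one hlam
  have hdet : IsUnit M.det := hMpd.det_pos.ne'.isUnit
  have hreg : (lam • mustar) ⬝ᵥ M⁻¹ *ᵥ (lam • mustar) ≤ lam * ∑ i, mustar i ^ 2 := by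
    have hsum : ∑ i, mustar i ^ 2 = mustar ⬝ᵥ mustar := by simp [dotProduct, sq]
    rw [mulVec_smul, smul_dotProduct, dotProduct_smul, smul_eq_mul, smul_eq_mul, hsum, hM]
    exact mul_le_mul_of_nonneg_left (hXX.mul_dotProduct_inv_add_smul_one_mulVec_le hlam _) hlam.le
  rw [hmuhat, hM, transpose_mul_self_add_smul_one_inv_mulVec_sub X (hM ▸ hdet), ← hM,
    dotProduct_mulVec_inv_mulVec hdet]
  calc _ ≤ √((Xᵀ *ᵥ xi) ⬝ᵥ M⁻¹ *ᵥ (Xᵀ *ᵥ xi)) + √((lam • mustar) ⬝ᵥ M⁻¹ *ᵥ (lam • mustar)) :=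
        hMpd.inv.posSemidef.sqrt_dotProduct_mulVec_sub_le _ _
    _ ≤ √((Xᵀ *ᵥ xi) ⬝ᵥ M⁻¹ *ᵥ (Xᵀ *ᵥ xi)) + √(lam * ∑ i, mustar i ^ 2) := by gcongr
    _ = _ := by rw [Real.sqrt_mul hlam.le, add_comm]
end
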